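/- arXiv:2601.06269 — 4 statements merged into one kernel-verified Lean document; each statement's English description precedes it below -/
import Mathlib

section
/- Let (X,α,*) be a probabilistic metric space and define φ_{λ,x}(y) = inf{γ ∈ [0,∞) : α(x,y,γ) > 1−λ} (with inf ∅ = ∞). If ε,λ,λ' ∈ (0,1] satisfy (1−λ')*(1−λ) > 1−ε, then for all x,y,z ∈ X: φ_{ε,x}(z) ≤ φ_{λ,x}(y) + φ_{λ',y}(z), where addition is in [0,∞] (strong mixed triangle inequality, condition (LT)). -/
open scoped ENNReal

noncomputable section

/-- A continuous t-norm `*` on the unit interval `[0,1] ⊆ ℝ`: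
`([0,1], *, 1)` is a commutative monoid, `*` is continuous on `[0,1] × [0,1]`
and monotone in both arguments. -/
structure ContinuousTNorm where
  mul : ℝ → ℝ → ℝ
  mem_mul : ∀ a b, a ∈ Set.Icc (0:ℝ) 1 → b ∈ Set.Icc (0:ℝ) 1 →
    mul a b ∈ Set.Icc (0:ℝ) 1
  mul_comm : ∀ a b, a ∈ Set.Icc (0:ℝ) 1 → b ∈ Set.Icc (0:ℝ) 1 → mul a b = mul b a
  mul_assoc : ∀ a b c, a ∈ Set.Icc (0:ℝ) 1 → b ∈ Set.Icc (0:ℝ) 1 →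
    c ∈ Set.Icc (0:ℝ) 1 → mul (mul a b) c = mul a (mul b c)
  mul_one : ∀ a, a ∈ Set.Icc (0:ℝ) 1 → mul a 1 = a
  continuousOn : ContinuousOn (fun p : ℝ × ℝ => mul p.1 p.2)
    (Set.Icc (0:ℝ) 1 ×ˢ Set.Icc (0:ℝ) 1)
  mul_mono : ∀ a a' b b', a ∈ Set.Icc (0:ℝ) 1 → a' ∈ Set.Icc (0:ℝ) 1 →
    b ∈ Set.Icc (0:ℝ) 1 → b' ∈ Set.Icc (0:ℝ) 1 → a ≤ a' → b ≤ b' →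
    mul a b ≤ mul a' b'

/-- `(X, α, *)` is a probabilistic metric space: `α : X × X × [0,∞] → [0,1]`
satisfies (P1)–(P5), where left-continuity on `(0,∞)` is expressed via suprema. -/
structure IsProbMetric {X : Type*} (T : ContinuousTNorm)
    (α : X → X → ℝ≥0∞ → ℝ) : Prop where
  mem : ∀ x y γ, α x y γ ∈ Set.Icc (0:ℝ) 1
  mono : ∀ x y, Monotone (α x y)
  zero : ∀ x y, α x y 0 = 0
  top : ∀ x y, α x y ⊤ = 1
  left_cont : ∀ x y (γ : ℝ≥0∞), 0 < γ → γ ≠ ⊤ →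
    α x y γ = sSup (α x y '' Set.Iio γ)
  refl : ∀ x (γ : ℝ≥0∞), 0 < γ → α x x γ = 1
  symm : ∀ x y γ, α x y γ = α y x γ
  sep : ∀ x y, (∀ γ : ℝ≥0∞, 0 < γ → α x y γ = 1) → x = y
  triangle : ∀ x y z (r s : ℝ≥0∞), T.mul (α y z r) (α x y s) ≤ α x z (r + s)

/-- `φ_{λ,x}(y) = inf {γ ∈ [0,∞) | α(x,y,γ) > 1 - λ}`, with `inf ∅ = ∞`. -/
noncomputable def phi {X : Type*} (α : X → X → ℝ≥0∞ → ℝ) (l : ℝ) (x y : X) : ℝ≥0∞ :=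
  sInf {γ : ℝ≥0∞ | γ ≠ ⊤ ∧ 1 - l < α x y γ}

/-!
If `α(x,y,γ) > 1-λ` and `α(y,z,δ) > 1-λ'`, then monotonicity of `*` and (P5) give
`α(x,z,γ+δ) ≥ (1-λ')*(1-λ) > 1-ε`, so `γ+δ` is admissible for `φ_{ε,x}(z)`;
taking infima over `γ` and `δ` gives the claim.
-/

section

variable {X : Type*} {T : ContinuousTNorm} {α : X → X → ℝ≥0∞ → ℝ}

theorem phi_le_of_lt {l : ℝ} {x y : X} {γ : ℝ≥0∞} (hγ : γ ≠ ⊤) (h : 1 - l < α x y γ) :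
    phi α l x y ≤ γ :=
  sInf_le ⟨hγ, h⟩

theorem le_phi_add_phi {a : ℝ≥0∞} {l l' : ℝ} {x y z : X}
    (h : ∀ γ δ, γ ≠ ⊤ → 1 - l < α x y γ → δ ≠ ⊤ → 1 - l' < α y z δ → a ≤ γ + δ) :
    a ≤ phi α l x y + phi α l' y z := by
  simp only [phi, sInf_eq_iInf]
  exact ENNReal.le_iInf₂_add_iInf₂ fun γ ⟨hγ, hxy⟩ δ ⟨hδ, hyz⟩ ↦ h γ δ hγ hxy hδ hyz

theorem IsProbMetric.mul_le_apply_add (hα : IsProbMetric T α) {x y z : X} {γ δ : ℝ≥0∞}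
    {a b : ℝ} (ha : a ∈ Set.Icc (0:ℝ) 1) (hb : b ∈ Set.Icc (0:ℝ) 1)
    (hxy : a ≤ α x y γ) (hyz : b ≤ α y z δ) : T.mul b a ≤ α x z (γ + δ) :=
  calc T.mul b a ≤ T.mul (α y z δ) (α x y γ) :=
        T.mul_mono _ _ _ _ hb (hα.mem _ _ _) ha (hα.mem _ _ _) hyz hxy
    _ ≤ α x z (δ + γ) := hα.triangle x y z δ γ
    _ = α x z (γ + δ) := by rw [add_comm]

end

theorem stmt5_general {X : Type*} (T : ContinuousTNorm) (α : X → X → ℝ≥0∞ → ℝ)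
    (hα : IsProbMetric T α) (ε l l' : ℝ)
    (hl0 : 0 < l) (hl1 : l ≤ 1) (hl'0 : 0 < l') (hl'1 : l' ≤ 1)
    (h : 1 - ε < T.mul (1 - l') (1 - l)) (x y z : X) :
    phi α ε x z ≤ phi α l x y + phi α l' y z := by
  have hl : 1 - l ∈ Set.Icc (0:ℝ) 1 := Set.Icc.mem_iff_one_sub_mem.mp ⟨hl0.le, hl1⟩
  have hl' : 1 - l' ∈ Set.Icc (0:ℝ) 1 := Set.Icc.mem_iff_one_sub_mem.mp ⟨hl'0.le, hl'1⟩
  refine le_phi_add_phi fun γ δ hγ hxy hδ hyz ↦ phi_le_of_lt ?_ ?_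
  · exact ENNReal.add_ne_top.mpr ⟨hγ, hδ⟩
  · exact h.trans_le (hα.mul_le_apply_add hl hl' hxy.le hyz.le)

/-- LT: If `ε, λ, λ' ∈ (0,1]` satisfy `(1-λ')*(1-λ) > 1-ε`, then
`φ_{ε,x}(z) ≤ φ_{λ,x}(y) + φ_{λ',y}(z)`. -/
theorem stmt5 {X : Type*} (T : ContinuousTNorm) (α : X → X → ℝ≥0∞ → ℝ)
    (hα : IsProbMetric T α) (ε l l' : ℝ) (hε0 : 0 < ε) (hε1 : ε ≤ 1)
    (hl0 : 0 < l) (hl1 : l ≤ 1) (hl'0 : 0 < l') (hl'1 : l' ≤ 1)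
    (h : 1 - ε < T.mul (1 - l') (1 - l)) (x y z : X) :
    phi α ε x z ≤ phi α l x y + phi α l' y z :=
  stmt5_general T α hα ε l l' hl0 hl1 hl'0 hl'1 h x y z
end
end

section
/- Let X be a set and let φ_{λ,x} : X → [0,∞] be a family of functions indexed by λ ∈ (0,1] and x ∈ X satisfying the density condition (LD): for every λ ∈ (0,1] and all x,y, φ_{λ,x}(y) = inf{φ_{ρ,x}(y) : 0 < ρ < λ}. Define β(x,y,γ) = sup{1−λ : λ ∈ (0,1], φ_{λ,x}(y) < γ} for γ < ∞ (with sup ∅ = 0), and define ψ_{λ,x}(y) = inf{γ ∈ [0,∞) : β(x,y,γ) > 1−λ} (with inf ∅ = ∞). Then ψ_{λ,x}(y) = φ_{λ,x}(y) for all λ ∈ (0,1] and all x,y ∈ X. -/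
/-! By (LD), `β(x,y,γ) > 1 - λ` holds iff `φ_{ρ,x}(y) < γ` for some `ρ < λ`, i.e. iff
`φ_{λ,x}(y) < γ`. So `ψ_{λ,x}(y)` is the infimum of the open interval `(φ_{λ,x}(y), ∞)`,
which is `φ_{λ,x}(y)` by density of `[0,∞]`. -/

open scoped ENNReal

noncomputable section

/-- `β(x,y,γ) = sup {1 - λ | λ ∈ (0,1], φ_{λ,x}(y) < γ}` (intended for `γ < ∞`),
with `sup ∅ = 0` (the junk value of `Real.sSup`). -/
noncomputable def betaFin {X : Type*} (φ : ℝ → X → X → ℝ≥0∞) (x y : X) (γ : ℝ≥0∞) : ℝ :=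
  sSup {t : ℝ | ∃ l : ℝ, 0 < l ∧ l ≤ 1 ∧ φ l x y < γ ∧ t = 1 - l}

open Set

theorem sInf_Ioo_top {α : Type*} [CompleteLinearOrder α] [DenselyOrdered α] (a : α) :
    sInf (Ioo a ⊤) = a := by
  rcases lt_or_eq_of_le (le_top : a ≤ ⊤) with ha | rfl
  · exact csInf_Ioo ha
  · rw [Ioo_self, sInf_empty]

theorem bddAbove_betaFin_set {X : Type*} (φ : ℝ → X → X → ℝ≥0∞) (x y : X) (γ : ℝ≥0∞) :
    BddAbove {t : ℝ | ∃ l : ℝ, 0 < l ∧ l ≤ 1 ∧ φ l x y < γ ∧ t = 1 - l} := by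
  refine ⟨1, ?_⟩
  rintro t ⟨l, hl0, -, -, rfl⟩
  linarith

theorem lt_betaFin_iff {X : Type*} {φ : ℝ → X → X → ℝ≥0∞} {l : ℝ} {x y : X}
    (hl1 : l ≤ 1) (hLD : φ l x y = sInf ((fun ρ => φ ρ x y) '' Ioo (0:ℝ) l)) (γ : ℝ≥0∞) :
    1 - l < betaFin φ x y γ ↔ φ l x y < γ := by
  rw [betaFin, hLD, sInf_lt_iff]
  set S := {t : ℝ | ∃ l : ℝ, 0 < l ∧ l ≤ 1 ∧ φ l x y < γ ∧ t = 1 - l}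
  constructor
  · intro h
    have hS : S.Nonempty := by
      by_contra hS
      rw [not_nonempty_iff_eq_empty] at hS
      rw [hS, Real.sSup_empty] at h
      linarith
    obtain ⟨-, ⟨ρ, hρ0, -, hργ, rfl⟩, hlρ⟩ := exists_lt_of_lt_csSup hS h
    exact ⟨φ ρ x y, ⟨ρ, ⟨hρ0, by linarith⟩, rfl⟩, hργ⟩
  · rintro ⟨-, ⟨ρ, ⟨hρ0, hρl⟩, rfl⟩, hργ⟩
    calc 1 - l < 1 - ρ := by linarith
      _ ≤ betaFin φ x y γ :=
        le_csSup (bddAbove_betaFin_set φ x y γ) ⟨ρ, hρ0, by linarith, hργ, rfl⟩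

/-- If the family `φ` satisfies (LD) and
`ψ_{λ,x}(y) = inf {γ ∈ [0,∞) | β(x,y,γ) > 1-λ}` (with `inf ∅ = ∞`), then
`ψ_{λ,x}(y) = φ_{λ,x}(y)` for all `λ ∈ (0,1]` and all `x, y`. -/
theorem stmt12 {X : Type*} (φ : ℝ → X → X → ℝ≥0∞)
    (hLD : ∀ l : ℝ, 0 < l → l ≤ 1 → ∀ x y : X,
      φ l x y = sInf ((fun ρ => φ ρ x y) '' Set.Ioo (0:ℝ) l))
    (l : ℝ) (hl0 : 0 < l) (hl1 : l ≤ 1) (x y : X) :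
    sInf {γ : ℝ≥0∞ | γ ≠ ⊤ ∧ 1 - l < betaFin φ x y γ} = φ l x y := by
  have hset : {γ : ℝ≥0∞ | γ ≠ ⊤ ∧ 1 - l < betaFin φ x y γ} = Ioo (φ l x y) ⊤ := by
    ext γ
    change _ ∧ _ ↔ _ ∧ _
    rw [lt_betaFin_iff hl1 (hLD l hl0 hl1 x y), ← lt_top_iff_ne_top, and_comm]
  rw [hset, sInf_Ioo_top]
end
end

section
/- Let * be a continuous t-norm on [0,1]. Let X be a set and let φ_{λ,x} : X → [0,∞] be a family of functions indexed by λ ∈ (0,1] and x ∈ X satisfying: (A1) φ_{λ,x}(x) = 0 for all λ,x; (LS) φ_{λ,x}(y) = φ_{λ,y}(x) for all λ,x,y; (LD) φ_{λ,x}(y) = inf{φ_{ρ,x}(y) : 0 < ρ < λ} for all λ,x,y; (LT) for all ε,λ,λ' ∈ (0,1] with (1−λ')*(1−λ) > 1−ε and all x,y,z, φ_{ε,x}(z) ≤ φ_{λ,x}(y) + φ_{λ',y}(z); and (LH) if x ≠ y then there exists λ ∈ (0,1] with φ_{λ,x}(y) > 0. Define β : X × X × [0,∞] → [0,1] by β(x,y,∞)=1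 and, for γ < ∞, β(x,y,γ) = sup{1−λ : λ ∈ (0,1], φ_{λ,x}(y) < γ} (with sup ∅ = 0). Then (X,β,*) is a probabilistic metric space, i.e. β satisfies (P1)–(P5). -/
/-!
`β(x,y,γ)` is the best confidence `1 - λ` at which the `λ`-distance `φ_{λ,x}(y)` is below `γ`.
Axioms (P1)–(P4) follow directly from (A1), (LS), (LH) and the antitonicity of `φ` in `λ`
forced by (LD). For (P5), admissible levels `1 - λ` for `(x,y,s)` and `1 - λ'` for `(y,z,r)`
make, through (LT), every level below `(1 - λ') * (1 - λ)` admissible for `(x,z,r+s)`;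
continuity of `*` carries this bound from pairs of admissible levels to their suprema.
-/

open scoped ENNReal

noncomputable section

/-- `β : X × X × [0,∞] → [0,1]` with `β(x,y,∞) = 1` and, for `γ < ∞`,
`β(x,y,γ) = sup {1 - λ | λ ∈ (0,1], φ_{λ,x}(y) < γ}` (with `sup ∅ = 0`). -/
noncomputable def betaE {X : Type*} (φ : ℝ → X → X → ℝ≥0∞) (x y : X) (γ : ℝ≥0∞) : ℝ :=
  if γ = ⊤ then 1 else betaFin φ x y γ

namespace ContinuousTNorm

variable (T : ContinuousTNorm)

lemma zero_mul {b : ℝ} (hb : b ∈ Set.Icc (0:ℝ) 1) : T.mul 0 b = 0 := by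
  have h0 : (0:ℝ) ∈ Set.Icc (0:ℝ) 1 := ⟨le_rfl, zero_le_one⟩
  refine le_antisymm ?_ (T.mem_mul 0 b h0 hb).1
  calc T.mul 0 b ≤ T.mul 0 1 := T.mul_mono _ _ _ _ h0 h0 hb ⟨zero_le_one, le_rfl⟩ le_rfl hb.2
    _ = 0 := T.mul_one 0 h0

lemma mul_zero {a : ℝ} (ha : a ∈ Set.Icc (0:ℝ) 1) : T.mul a 0 = 0 := by
  rw [T.mul_comm a 0 ha ⟨le_rfl, zero_le_one⟩, T.zero_mul ha]

lemma mul_sSup_le {A B : Set ℝ} {c : ℝ} (hA : A ⊆ Set.Icc 0 1) (hB : B ⊆ Set.Icc 0 1)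
    (hc : 0 ≤ c) (h : ∀ a ∈ A, ∀ b ∈ B, T.mul a b ≤ c) : T.mul (sSup A) (sSup B) ≤ c := by
  have sSup_mem {S : Set ℝ} (hS : S ⊆ Set.Icc 0 1) : sSup S ∈ Set.Icc (0:ℝ) 1 :=
    ⟨Real.sSup_nonneg fun a ha => (hS ha).1, Real.sSup_le (fun a ha => (hS ha).2) zero_le_one⟩
  rcases A.eq_empty_or_nonempty with rfl | hAne
  · rwa [Real.sSup_empty, T.zero_mul (sSup_mem hB)]
  rcases B.eq_empty_or_nonempty with rfl | hBne
  · rwa [Real.sSup_empty, T.mul_zero (sSup_mem hA)]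
  have hmem : (sSup A, sSup B) ∈ closure (A ×ˢ B) := by
    rw [closure_prod_eq]
    exact ⟨csSup_mem_closure hAne ⟨1, fun a ha => (hA ha).2⟩,
      csSup_mem_closure hBne ⟨1, fun b hb => (hB hb).2⟩⟩
  have hcont := (T.continuousOn (sSup A, sSup B) ⟨sSup_mem hA, sSup_mem hB⟩).mono
    (Set.prod_mono hA hB)
  refine closure_minimal ?_ isClosed_Iic (hcont.mem_closure_image hmem)
  rintro _ ⟨⟨a, b⟩, ⟨ha, hb⟩, rfl⟩
  exact h a ha b hb

end ContinuousTNorm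

namespace betaFin

variable {X : Type*} (φ : ℝ → X → X → ℝ≥0∞)

def levels (x y : X) (γ : ℝ≥0∞) : Set ℝ :=
  {t : ℝ | ∃ l : ℝ, 0 < l ∧ l ≤ 1 ∧ φ l x y < γ ∧ t = 1 - l}

lemma eq_sSup_levels (x y : X) (γ : ℝ≥0∞) : betaFin φ x y γ = sSup (levels φ x y γ) := rfl

lemma levels_subset_Icc (x y : X) (γ : ℝ≥0∞) : levels φ x y γ ⊆ Set.Icc 0 1 := by
  rintro t ⟨l, hl0, hl1, -, rfl⟩
  exact ⟨by linarith, by linarith⟩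

lemma bddAbove_levels (x y : X) (γ : ℝ≥0∞) : BddAbove (levels φ x y γ) :=
  ⟨1, fun _ ht => (levels_subset_Icc φ x y γ ht).2⟩

lemma mem_Icc (x y : X) (γ : ℝ≥0∞) : betaFin φ x y γ ∈ Set.Icc (0:ℝ) 1 :=
  ⟨Real.sSup_nonneg fun _ ht => (levels_subset_Icc φ x y γ ht).1,
    Real.sSup_le (fun _ ht => (levels_subset_Icc φ x y γ ht).2) zero_le_one⟩

lemma one_sub_le {x y : X} {γ : ℝ≥0∞} {l : ℝ} (hl0 : 0 < l) (hl1 : l ≤ 1)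
    (hφ : φ l x y < γ) : 1 - l ≤ betaFin φ x y γ :=
  le_csSup (bddAbove_levels φ x y γ) ⟨l, hl0, hl1, hφ, rfl⟩

lemma le_of_forall_gt_one_sub {x y : X} {γ : ℝ≥0∞} {m : ℝ} (hm : m ≤ 1)
    (h : ∀ l, 0 < l → l ≤ 1 → 1 - m < l → φ l x y < γ) : m ≤ betaFin φ x y γ := by
  refine le_of_forall_lt_imp_le_of_dense fun c hc => ?_
  rcases lt_or_ge c 0 with hc0 | hc0
  · exact hc0.le.trans (mem_Icc φ x y γ).1
  simpa using one_sub_le φ (by linarith) (by linarith) (h (1 - c) (by linarith) (by linarith)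
    (by linarith))

lemma monotone (x y : X) : Monotone (betaFin φ x y) := by
  intro γ γ' h
  refine Real.sSup_le (fun t ht => ?_) (mem_Icc φ x y γ').1
  obtain ⟨l, hl0, hl1, hφ, rfl⟩ := ht
  exact one_sub_le φ hl0 hl1 (hφ.trans_le h)

lemma zero (x y : X) : betaFin φ x y 0 = 0 := by
  rw [← Real.sSup_empty]
  refine congrArg sSup (Set.eq_empty_of_forall_notMem ?_)
  rintro _ ⟨_, _, _, hφ, _⟩
  exact ENNReal.not_lt_zero hφ

lemma eq_sSup_image_Iio (x y : X) {γ : ℝ≥0∞} (hγ : 0 < γ) :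
    betaFin φ x y γ = sSup (betaFin φ x y '' Set.Iio γ) := by
  have hbdd : BddAbove (betaFin φ x y '' Set.Iio γ) := by
    refine ⟨1, ?_⟩
    rintro _ ⟨γ', -, rfl⟩
    exact (mem_Icc φ x y γ').2
  apply le_antisymm
  · refine Real.sSup_le (fun t ht => ?_) ((mem_Icc φ x y 0).1.trans (le_csSup hbdd ⟨0, hγ, rfl⟩))
    obtain ⟨l, hl0, hl1, hφ, rfl⟩ := ht
    obtain ⟨γ', hφγ', hγ'⟩ := exists_between hφ
    exact le_csSup_of_le hbdd ⟨γ', hγ', rfl⟩ (one_sub_le φ hl0 hl1 hφγ')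
  · refine csSup_le ⟨_, 0, hγ, rfl⟩ ?_
    rintro _ ⟨γ', hγ', rfl⟩
    exact monotone φ x y hγ'.le

lemma self {x : X} (hφ : ∀ l, 0 < l → l ≤ 1 → φ l x x = 0) {γ : ℝ≥0∞} (hγ : 0 < γ) :
    betaFin φ x x γ = 1 :=
  le_antisymm (mem_Icc φ x x γ).2 <|
    le_of_forall_gt_one_sub φ le_rfl fun l hl0 hl1 _ => (hφ l hl0 hl1).symm ▸ hγ

lemma comm {x y : X} (hφ : ∀ l, 0 < l → l ≤ 1 → φ l x y = φ l y x) (γ : ℝ≥0∞) :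
    betaFin φ x y γ = betaFin φ y x γ := by
  unfold betaFin
  congr! 3 with t
  refine exists_congr fun l => and_congr_right fun hl0 => and_congr_right fun hl1 => ?_
  rw [hφ l hl0 hl1]

/-- Admissible levels lie strictly above `l₀` once `γ ≤ φ_{l₀,x}(y)`, by antitonicity in `λ`. -/
lemma le_one_sub {x y : X} (hanti : AntitoneOn (φ · x y) (Set.Ioc 0 1)) {l₀ : ℝ}
    (hl₀0 : 0 < l₀) (hl₀1 : l₀ ≤ 1) {γ : ℝ≥0∞} (hγ : γ ≤ φ l₀ x y) :
    betaFin φ x y γ ≤ 1 - l₀ := by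
  refine Real.sSup_le (fun t ht => ?_) (by linarith)
  obtain ⟨l, hl0, hl1, hφ, rfl⟩ := ht
  suffices l₀ < l by linarith
  by_contra! hle
  exact (hφ.trans_le hγ).not_ge (hanti ⟨hl0, hl1⟩ ⟨hl₀0, hl₀1⟩ hle)

lemma mul_one_sub_le (T : ContinuousTNorm)
    (hLT : ∀ ε l l' : ℝ, 0 < ε → ε ≤ 1 → 0 < l → l ≤ 1 → 0 < l' → l' ≤ 1 →
      1 - ε < T.mul (1 - l') (1 - l) → ∀ x y z : X, φ ε x z ≤ φ l x y + φ l' y z)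
    {x y z : X} {r s : ℝ≥0∞} {l l' : ℝ} (hl0 : 0 < l) (hl1 : l ≤ 1) (hl'0 : 0 < l')
    (hl'1 : l' ≤ 1) (hs : φ l x y < s) (hr : φ l' y z < r) :
    T.mul (1 - l') (1 - l) ≤ betaFin φ x z (r + s) := by
  have hm := T.mem_mul (1 - l') (1 - l) ⟨by linarith, by linarith⟩ ⟨by linarith, by linarith⟩
  refine le_of_forall_gt_one_sub φ hm.2 fun ε hε0 hε1 hε => ?_
  calc φ ε x z ≤ φ l x y + φ l' y z := hLT ε l l' hε0 hε1 hl0 hl1 hl'0 hl'1 (by linarith) x y z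
    _ < s + r := ENNReal.add_lt_add hs hr
    _ = r + s := add_comm s r

lemma triangle (T : ContinuousTNorm)
    (hLT : ∀ ε l l' : ℝ, 0 < ε → ε ≤ 1 → 0 < l → l ≤ 1 → 0 < l' → l' ≤ 1 →
      1 - ε < T.mul (1 - l') (1 - l) → ∀ x y z : X, φ ε x z ≤ φ l x y + φ l' y z)
    (x y z : X) (r s : ℝ≥0∞) :
    T.mul (betaFin φ y z r) (betaFin φ x y s) ≤ betaFin φ x z (r + s) := by
  rw [eq_sSup_levels, eq_sSup_levels, eq_sSup_levels]
  refine T.mul_sSup_le (levels_subset_Icc φ y z r) (levels_subset_Icc φ x y s)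
    (mem_Icc φ x z _).1 ?_
  rintro _ ⟨l', hl'0, hl'1, hr, rfl⟩ _ ⟨l, hl0, hl1, hs, rfl⟩
  exact mul_one_sub_le φ T hLT hl0 hl1 hl'0 hl'1 hs hr

end betaFin

namespace betaE

variable {X : Type*} (φ : ℝ → X → X → ℝ≥0∞)

lemma of_ne_top (x y : X) {γ : ℝ≥0∞} (hγ : γ ≠ ⊤) : betaE φ x y γ = betaFin φ x y γ :=
  if_neg hγ

lemma mem_Icc (x y : X) (γ : ℝ≥0∞) : betaE φ x y γ ∈ Set.Icc (0:ℝ) 1 := by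
  unfold betaE
  split
  · exact ⟨zero_le_one, le_rfl⟩
  · exact betaFin.mem_Icc φ x y γ

lemma monotone (x y : X) : Monotone (betaE φ x y) := by
  intro γ γ' h
  rcases eq_or_ne γ' ⊤ with rfl | hγ'
  · exact (mem_Icc φ x y γ).2
  rw [of_ne_top φ x y hγ', of_ne_top φ x y (ne_top_of_le_ne_top hγ' h)]
  exact betaFin.monotone φ x y h

lemma zero (x y : X) : betaE φ x y 0 = 0 :=
  (of_ne_top φ x y ENNReal.zero_ne_top).trans (betaFin.zero φ x y)

lemma self {x : X} (hφ : ∀ l, 0 < l → l ≤ 1 → φ l x x = 0) {γ : ℝ≥0∞} (hγ : 0 < γ) :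
    betaE φ x x γ = 1 := by
  unfold betaE
  split
  · rfl
  · exact betaFin.self φ hφ hγ

lemma comm {x y : X} (hφ : ∀ l, 0 < l → l ≤ 1 → φ l x y = φ l y x) (γ : ℝ≥0∞) :
    betaE φ x y γ = betaE φ y x γ := by
  unfold betaE
  rw [betaFin.comm φ hφ]

lemma eq_sSup_image_Iio (x y : X) {γ : ℝ≥0∞} (hγ0 : 0 < γ) (hγ : γ ≠ ⊤) :
    betaE φ x y γ = sSup (betaE φ x y '' Set.Iio γ) := by
  rw [of_ne_top φ x y hγ, betaFin.eq_sSup_image_Iio φ x y hγ0]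
  exact congrArg sSup (Set.image_congr fun γ' hγ' => (of_ne_top φ x y (ne_top_of_lt hγ')).symm)

lemma eq_of_forall_eq_one {x y : X} (hanti : AntitoneOn (φ · x y) (Set.Ioc 0 1))
    (hpos : x ≠ y → ∃ l : ℝ, 0 < l ∧ l ≤ 1 ∧ 0 < φ l x y)
    (h : ∀ γ : ℝ≥0∞, 0 < γ → betaE φ x y γ = 1) : x = y := by
  by_contra hxy
  obtain ⟨l₀, hl₀0, hl₀1, hφ⟩ := hpos hxy
  have hγ : min (φ l₀ x y) 1 ≠ ⊤ := ne_top_of_le_ne_top ENNReal.one_ne_top (min_le_right _ _)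
  have hle := betaFin.le_one_sub φ hanti hl₀0 hl₀1 (min_le_left (φ l₀ x y) 1)
  rw [← of_ne_top φ x y hγ, h _ (lt_min hφ zero_lt_one)] at hle
  linarith

lemma triangle (T : ContinuousTNorm)
    (hLT : ∀ ε l l' : ℝ, 0 < ε → ε ≤ 1 → 0 < l → l ≤ 1 → 0 < l' → l' ≤ 1 →
      1 - ε < T.mul (1 - l') (1 - l) → ∀ x y z : X, φ ε x z ≤ φ l x y + φ l' y z)
    (x y z : X) (r s : ℝ≥0∞) :
    T.mul (betaE φ y z r) (betaE φ x y s) ≤ betaE φ x z (r + s) := by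
  by_cases hrs : r + s = ⊤
  · rw [betaE.eq_def φ x z, if_pos hrs]
    exact (T.mem_mul _ _ (mem_Icc φ y z r) (mem_Icc φ x y s)).2
  obtain ⟨hr, hs⟩ := ENNReal.add_ne_top.mp hrs
  rw [of_ne_top φ y z hr, of_ne_top φ x y hs, of_ne_top φ x z hrs]
  exact betaFin.triangle φ T hLT x y z r s

end betaE

lemma antitoneOn_of_eq_sInf {X : Type*} {φ : ℝ → X → X → ℝ≥0∞} {x y : X}
    (hLD : ∀ l : ℝ, 0 < l → l ≤ 1 → φ l x y = sInf ((fun ρ => φ ρ x y) '' Set.Ioo (0:ℝ) l)) :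
    AntitoneOn (φ · x y) (Set.Ioc 0 1) := by
  rintro ρ ⟨hρ0, -⟩ l ⟨hl0, hl1⟩ hρl
  rcases hρl.eq_or_lt with rfl | hρl
  · exact le_rfl
  simp only [hLD l hl0 hl1]
  exact sInf_le ⟨ρ, ⟨hρ0, hρl⟩, rfl⟩

/-- If the family `φ` satisfies (A1), (LS), (LD), (LT) for a
continuous t-norm `*`, and (LH), then `(X, β, *)` is a probabilistic metric
space, i.e. `β` satisfies (P1)–(P5). -/
theorem stmt13 {X : Type*} (T : ContinuousTNorm) (φ : ℝ → X → X → ℝ≥0∞)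
    (hA1 : ∀ l : ℝ, 0 < l → l ≤ 1 → ∀ x : X, φ l x x = 0)
    (hLS : ∀ l : ℝ, 0 < l → l ≤ 1 → ∀ x y : X, φ l x y = φ l y x)
    (hLD : ∀ l : ℝ, 0 < l → l ≤ 1 → ∀ x y : X,
      φ l x y = sInf ((fun ρ => φ ρ x y) '' Set.Ioo (0:ℝ) l))
    (hLT : ∀ ε l l' : ℝ, 0 < ε → ε ≤ 1 → 0 < l → l ≤ 1 → 0 < l' → l' ≤ 1 →
      1 - ε < T.mul (1 - l') (1 - l) →
      ∀ x y z : X, φ ε x z ≤ φ l x y + φ l' y z)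
    (hLH : ∀ x y : X, x ≠ y → ∃ l : ℝ, 0 < l ∧ l ≤ 1 ∧ 0 < φ l x y) :
    IsProbMetric T (fun x y γ => betaE φ x y γ) :=
  { mem := betaE.mem_Icc φ
    mono := betaE.monotone φ
    zero := betaE.zero φ
    top := fun _ _ => if_pos rfl
    left_cont := fun x y _ => betaE.eq_sSup_image_Iio φ x y
    refl := fun x _ => betaE.self φ fun l hl0 hl1 => hA1 l hl0 hl1 x
    symm := fun x y => betaE.comm φ fun l hl0 hl1 => hLS l hl0 hl1 x y
    sep := fun x y => betaE.eq_of_forall_eq_one φ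
      (antitoneOn_of_eq_sInf fun l hl0 hl1 => hLD l hl0 hl1 x y) (hLH x y)
    triangle := betaE.triangle φ T hLT }
end
end

section
/- Let X and Y be sets, let d_λ : X × X → [0,∞] and d'_λ : Y × Y → [0,∞] be families of distances indexed by λ ∈ (0,1], each satisfying the density condition (UD): d_λ(x,y) = inf{d_ρ(x,y) : 0 < ρ < λ} for all λ and all points (and likewise for d'). Define β : X × X × [0,∞] → [0,1] by β(x,y,∞)=1 and, for γ < ∞, β(x,y,γ) = sup{1−λ : λ ∈ (0,1], d_λ(x,y) < γ} (sup ∅ = 0), and define β' on Y analogously from the d'_λ. Then a map f : X → Y satisfies d'_λ(f(x),f(x')) ≤ d_λ(x,x') for all λ ∈ (0,1] and all x,x' ∈ X (levelwise non-expansive) if and only if β(x,x',γ) ≤ β'(f(x),f(x'),γ) for all x,x' ∈ X and all γ ∈ [0,∞]. -/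
open scoped ENNReal

noncomputable section

/-! Under the density condition (UD) `d_λ = inf_{ρ < λ} d_ρ`, the family is antitone in `λ`,
and `d_λ < γ` already forces `d_ρ < γ` for some `ρ < λ`. Together these give
`d_λ(x,y) < γ ↔ 1 - λ < β(x,y,γ)`, so `β` remembers every sublevel set of `λ ↦ d_λ(x,y)`.
Levelwise domination `d' ≤ d` clearly gives `β ≤ β'`; conversely `β ≤ β'` turns
`d_λ < γ` into `d'_λ < γ` for every finite `γ`, hence `d'_λ ≤ d_λ`. -/

section Beta

variable {X Y : Type*}

lemma bddAbove_betaSet (φ : ℝ → X → X → ℝ≥0∞) (x y : X) (γ : ℝ≥0∞) :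
    BddAbove {t : ℝ | ∃ l : ℝ, 0 < l ∧ l ≤ 1 ∧ φ l x y < γ ∧ t = 1 - l} :=
  ⟨1, by rintro t ⟨l, hl0, -, -, rfl⟩; linarith⟩

lemma betaFin_nonneg (φ : ℝ → X → X → ℝ≥0∞) (x y : X) (γ : ℝ≥0∞) :
    0 ≤ betaFin φ x y γ :=
  Real.sSup_nonneg <| by rintro t ⟨l, -, hl1, -, rfl⟩; linarith

lemma sub_le_betaFin {φ : ℝ → X → X → ℝ≥0∞} {x y : X} {γ : ℝ≥0∞} {l : ℝ}
    (hl0 : 0 < l) (hl1 : l ≤ 1) (hlt : φ l x y < γ) :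
    1 - l ≤ betaFin φ x y γ :=
  le_csSup (bddAbove_betaSet φ x y γ) ⟨l, hl0, hl1, hlt, rfl⟩

lemma exists_lt_of_sub_lt_betaFin {φ : ℝ → X → X → ℝ≥0∞} {x y : X} {γ : ℝ≥0∞} {l : ℝ}
    (hl1 : l ≤ 1) (h : 1 - l < betaFin φ x y γ) :
    ∃ m, 0 < m ∧ m < l ∧ φ m x y < γ := by
  have hne : {t : ℝ | ∃ m : ℝ, 0 < m ∧ m ≤ 1 ∧ φ m x y < γ ∧ t = 1 - m}.Nonempty := by
    by_contra hempty
    rw [Set.not_nonempty_iff_eq_empty] at hempty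
    rw [betaFin, hempty, Real.sSup_empty] at h
    linarith
  obtain ⟨_, ⟨m, hm0, -, hmγ, rfl⟩, hlt⟩ := exists_lt_of_lt_csSup hne h
  exact ⟨m, hm0, by linarith, hmγ⟩

lemma betaFin_mono {φ : ℝ → X → X → ℝ≥0∞} {ψ : ℝ → Y → Y → ℝ≥0∞} {x x' : X} {y y' : Y}
    (h : ∀ l : ℝ, 0 < l → l ≤ 1 → ψ l y y' ≤ φ l x x') (γ : ℝ≥0∞) :
    betaFin φ x x' γ ≤ betaFin ψ y y' γ := by
  rcases Set.eq_empty_or_nonempty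
      {t : ℝ | ∃ l : ℝ, 0 < l ∧ l ≤ 1 ∧ φ l x x' < γ ∧ t = 1 - l} with hempty | hne
  · rw [betaFin, hempty, Real.sSup_empty]
    exact betaFin_nonneg ψ y y' γ
  · refine csSup_le_csSup (bddAbove_betaSet ψ y y' γ) hne ?_
    rintro t ⟨l, hl0, hl1, hlt, rfl⟩
    exact ⟨l, hl0, hl1, (h l hl0 hl1).trans_lt hlt, rfl⟩

lemma betaE_mono {φ : ℝ → X → X → ℝ≥0∞} {ψ : ℝ → Y → Y → ℝ≥0∞} {x x' : X} {y y' : Y}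
    (h : ∀ l : ℝ, 0 < l → l ≤ 1 → ψ l y y' ≤ φ l x x') (γ : ℝ≥0∞) :
    betaE φ x x' γ ≤ betaE ψ y y' γ := by
  unfold betaE
  split_ifs
  · exact le_rfl
  · exact betaFin_mono h γ

lemma lt_iff_sub_lt_betaFin {φ : ℝ → X → X → ℝ≥0∞} {x y : X}
    (hUD : ∀ l : ℝ, 0 < l → l ≤ 1 → φ l x y = sInf ((fun ρ => φ ρ x y) '' Set.Ioo (0:ℝ) l))
    {l : ℝ} (hl0 : 0 < l) (hl1 : l ≤ 1) (γ : ℝ≥0∞) :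
    φ l x y < γ ↔ 1 - l < betaFin φ x y γ := by
  constructor
  · intro hlt
    rw [hUD l hl0 hl1] at hlt
    obtain ⟨_, ⟨ρ, ⟨hρ0, hρl⟩, rfl⟩, hργ⟩ := sInf_lt_iff.mp hlt
    calc 1 - l < 1 - ρ := by linarith
      _ ≤ betaFin φ x y γ := sub_le_betaFin hρ0 (hρl.le.trans hl1) hργ
  · intro hβ
    obtain ⟨m, hm0, hml, hmγ⟩ := exists_lt_of_sub_lt_betaFin hl1 hβ
    refine lt_of_le_of_lt ?_ hmγ
    rw [hUD l hl0 hl1]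
    exact sInf_le ⟨m, ⟨hm0, hml⟩, rfl⟩

end Beta

theorem stmt16_general {X Y : Type*} (d : ℝ → X → X → ℝ≥0∞) (d' : ℝ → Y → Y → ℝ≥0∞)
    (hUD : ∀ l : ℝ, 0 < l → l ≤ 1 → ∀ x x' : X,
      d l x x' = sInf ((fun ρ => d ρ x x') '' Set.Ioo (0:ℝ) l))
    (hUD' : ∀ l : ℝ, 0 < l → l ≤ 1 → ∀ y y' : Y,
      d' l y y' = sInf ((fun ρ => d' ρ y y') '' Set.Ioo (0:ℝ) l))
    (f : X → Y) :
    (∀ l : ℝ, 0 < l → l ≤ 1 → ∀ x x' : X, d' l (f x) (f x') ≤ d l x x') ↔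
    (∀ (x x' : X) (γ : ℝ≥0∞), betaE d x x' γ ≤ betaE d' (f x) (f x') γ) := by
  refine ⟨fun h x x' => betaE_mono fun l hl0 hl1 => h l hl0 hl1 x x', ?_⟩
  intro h l hl0 hl1 x x'
  by_contra! hgt
  obtain ⟨γ, hdγ, hγd'⟩ := exists_between hgt
  have hγ : γ ≠ ⊤ := (hγd'.trans_le le_top).ne
  have hβ : betaFin d x x' γ ≤ betaFin d' (f x) (f x') γ := by
    simpa only [betaE, if_neg hγ] using h x x' γ
  have hd'γ : d' l (f x) (f x') < γ :=
    (lt_iff_sub_lt_betaFin (fun l hl0 hl1 => hUD' l hl0 hl1 (f x) (f x')) hl0 hl1 γ).mpr <|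
      ((lt_iff_sub_lt_betaFin (fun l hl0 hl1 => hUD l hl0 hl1 x x') hl0 hl1 γ).mp hdγ).trans_le hβ
  exact hγd'.not_gt hd'γ

/-- For families of distances `d`, `d'` satisfying (UD), a map
`f : X → Y` is levelwise non-expansive iff `β(x,x',γ) ≤ β'(f x, f x', γ)` for
all `x, x'` and all `γ ∈ [0,∞]`. -/
theorem stmt16 {X Y : Type*} (d : ℝ → X → X → ℝ≥0∞) (d' : ℝ → Y → Y → ℝ≥0∞)
    (hd0 : ∀ l : ℝ, 0 < l → l ≤ 1 → ∀ x : X, d l x x = 0)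
    (hd'0 : ∀ l : ℝ, 0 < l → l ≤ 1 → ∀ y : Y, d' l y y = 0)
    (hUD : ∀ l : ℝ, 0 < l → l ≤ 1 → ∀ x x' : X,
      d l x x' = sInf ((fun ρ => d ρ x x') '' Set.Ioo (0:ℝ) l))
    (hUD' : ∀ l : ℝ, 0 < l → l ≤ 1 → ∀ y y' : Y,
      d' l y y' = sInf ((fun ρ => d' ρ y y') '' Set.Ioo (0:ℝ) l))
    (f : X → Y) :
    (∀ l : ℝ, 0 < l → l ≤ 1 → ∀ x x' : X, d' l (f x) (f x') ≤ d l x x') ↔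
    (∀ (x x' : X) (γ : ℝ≥0∞), betaE d x x' γ ≤ betaE d' (f x) (f x') γ) :=
  stmt16_general d d' hUD hUD' f
end
end
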